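/- arXiv:math/0204106 — 5 statements merged into one kernel-verified Lean document; each statement's English description precedes it below -/
import Mathlib

section
/- If a plane P does not separate the two endpoints of an arc Γ (both endpoints strictly on the same side of P), and Γ meets P, then Γ crosses P at least twice: indeed, an arc whose endpoints are not in P intersects P an even number of times if its endpoints lie on the same side of P, and an odd number of times otherwise (counting components of the preimage with glancing components counted twice). -/
open Set
open scoped Classical

noncomputable section

/-- The connected components of the set `Z ⊆ ℝ`. -/
def arcComps (Z : Set ℝ) : Set (Set ℝ) :=
  {S | ∃ t ∈ Z, S = connectedComponentIn Z t}

/-- The arc just after the component `S` (within the parameter interval `[0,1]`)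
lies above the level `c`. -/
def ArcAboveAfter (g : ℝ → ℝ) (c : ℝ) (S : Set ℝ) : Prop :=
  ∃ ε > 0, ∀ s ∈ Ioo (sSup S) (sSup S + ε) ∩ Icc (0 : ℝ) 1, c < g s

/-- The arc just before the component `S` (within `[0,1]`) lies above `c`. -/
def ArcAboveBefore (g : ℝ → ℝ) (c : ℝ) (S : Set ℝ) : Prop :=
  ∃ ε > 0, ∀ s ∈ Ioo (sInf S - ε) (sInf S) ∩ Icc (0 : ℝ) 1, c < g s

/-- A glancing component: the arcs immediately before and after lie on the same
side of the level `c`; such a component counts twice. -/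
def ArcGlancing (g : ℝ → ℝ) (c : ℝ) (S : Set ℝ) : Prop :=
  ArcAboveBefore g c S ↔ ArcAboveAfter g c S

/-- Sign constancy on an interval without zeros of `g - c`. -/
lemma arc_signConst {g : ℝ → ℝ} {c : ℝ} (hg : ContinuousOn g (Icc (0:ℝ) 1))
    {x y : ℝ} (hx : 0 ≤ x) (hxy : x ≤ y) (hy : y ≤ 1)
    (h : ∀ t ∈ Icc x y, g t ≠ c) : ((g x < c) ↔ (g y < c)) := by
  have hsub : Icc x y ⊆ Icc (0:ℝ) 1 := Icc_subset_Icc hx hy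
  have hg' : ContinuousOn g (Icc x y) := hg.mono hsub
  constructor
  · intro hgx
    by_contra hgy
    have hgy' : c < g y := lt_of_le_of_ne (not_lt.mp hgy) (Ne.symm (h y ⟨hxy, le_refl y⟩))
    have : c ∈ Icc (g x) (g y) := ⟨le_of_lt hgx, le_of_lt hgy'⟩
    obtain ⟨t, ht, hgt⟩ := intermediate_value_Icc hxy hg' this
    exact h t ht hgt
  · intro hgy
    by_contra hgx
    have hgx' : c < g x := lt_of_le_of_ne (not_lt.mp hgx) (Ne.symm (h x ⟨le_refl x, hxy⟩))
    have : c ∈ Icc (g y) (g x) := ⟨le_of_lt hgy, le_of_lt hgx'⟩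
    obtain ⟨t, ht, hgt⟩ := intermediate_value_Icc' hxy hg' this
    exact h t ht hgt

set_option maxHeartbeats 2000000 in
/-- The main induction: walking along the arc from a point `u` below all
components in `F`, the parity of the weighted count of components above `u`
matches the sign comparison of `g u` and `g 1`. -/
lemma arc_main (g : ℝ → ℝ) (hg : ContinuousOn g (Icc (0:ℝ) 1)) (c : ℝ)
    (h0 : g 0 ≠ c) (h1 : g 1 ≠ c)
    (Z : Set ℝ) (hZ : Z = {t ∈ Icc (0:ℝ) 1 | g t = c})
    (hfin : (arcComps Z).Finite) :
    ∀ F : Finset (Set ℝ), ∀ u : ℝ, 0 ≤ u → u < 1 → g u ≠ c →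
      (∀ S ∈ hfin.toFinset, (S ⊆ Ioi u ↔ S ∈ F)) → F ⊆ hfin.toFinset →
      (Even (∑ S ∈ F, (if ArcGlancing g c S then 2 else 1)) ↔
        ((g u < c) ↔ (g 1 < c))) := by
  -- basic facts about Z
  have hZsub : Z ⊆ Icc (0:ℝ) 1 := by rw [hZ]; intro t ht; exact ht.1
  have hZc : ∀ t ∈ Z, g t = c := by rw [hZ]; intro t ht; exact ht.2
  have hmemZ : ∀ t, t ∈ Icc (0:ℝ) 1 → g t = c → t ∈ Z := by
    rw [hZ]; intro t ht hgt; exact ⟨ht, hgt⟩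
  have hZclosed : IsClosed Z := by
    rw [hZ]
    have : {t ∈ Icc (0:ℝ) 1 | g t = c} = Icc (0:ℝ) 1 ∩ g ⁻¹' {c} := by
      ext t
      simp only [mem_setOf_eq, mem_inter_iff, mem_preimage, mem_singleton_iff, sep_setOf]
    rw [this]
    exact hg.preimage_isClosed_of_isClosed isClosed_Icc isClosed_singleton
  have h0Z : (0:ℝ) ∉ Z := fun h => h0 (hZc 0 h)
  have h1Z : (1:ℝ) ∉ Z := fun h => h1 (hZc 1 h)
  -- facts about components
  have hcc : ∀ S ∈ hfin.toFinset, S.Nonempty ∧ S ⊆ Z ∧ IsClosed S ∧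
      S = Icc (sInf S) (sSup S) := by
    intro S hS
    rw [Set.Finite.mem_toFinset] at hS
    obtain ⟨t, htZ, rfl⟩ := hS
    have htS : t ∈ connectedComponentIn Z t := mem_connectedComponentIn htZ
    have hne : (connectedComponentIn Z t).Nonempty := ⟨t, htS⟩
    have hsubZ : connectedComponentIn Z t ⊆ Z := connectedComponentIn_subset Z t
    have hpc : IsPreconnected (connectedComponentIn Z t) :=
      isPreconnected_connectedComponentIn
    have hclosed : IsClosed (connectedComponentIn Z t) := by
      have hclpc : IsPreconnected (closure (connectedComponentIn Z t)) := hpc.closure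
      have hclsub : closure (connectedComponentIn Z t) ⊆ Z :=
        hZclosed.closure_subset_iff.mpr hsubZ
      have htcl : t ∈ closure (connectedComponentIn Z t) := subset_closure htS
      have : closure (connectedComponentIn Z t) ⊆ connectedComponentIn Z t :=
        hclpc.subset_connectedComponentIn htcl hclsub
      exact isClosed_of_closure_subset this
    refine ⟨hne, hsubZ, hclosed, ?_⟩
    have hbddb : BddBelow (connectedComponentIn Z t) :=
      ⟨0, fun x hx => (hZsub (hsubZ hx)).1⟩
    have hbdda : BddAbove (connectedComponentIn Z t) :=
      ⟨1, fun x hx => (hZsub (hsubZ hx)).2⟩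
    have hcompact : IsCompact (connectedComponentIn Z t) :=
      IsCompact.of_isClosed_subset isCompact_Icc hclosed (hsubZ.trans hZsub)
    have hinf : sInf (connectedComponentIn Z t) ∈ connectedComponentIn Z t :=
      hcompact.sInf_mem hne
    have hsup : sSup (connectedComponentIn Z t) ∈ connectedComponentIn Z t :=
      hcompact.sSup_mem hne
    apply Subset.antisymm
    · intro s hs
      exact ⟨csInf_le hbddb hs, le_csSup hbdda hs⟩
    · exact hpc.ordConnected.out hinf hsup
  have hbddS : ∀ S ∈ hfin.toFinset, BddBelow S := by
    intro S hS
    exact ⟨0, fun x hx => (hZsub ((hcc S hS).2.1 hx)).1⟩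
  have hbddA : ∀ S ∈ hfin.toFinset, BddAbove S := by
    intro S hS
    exact ⟨1, fun x hx => (hZsub ((hcc S hS).2.1 hx)).2⟩
  have hmemIS : ∀ S ∈ hfin.toFinset, sInf S ∈ S ∧ sSup S ∈ S := by
    intro S hS
    obtain ⟨hne, hsubZ, hcl, _⟩ := hcc S hS
    have hcompact : IsCompact S :=
      IsCompact.of_isClosed_subset isCompact_Icc hcl (hsubZ.trans hZsub)
    exact ⟨hcompact.sInf_mem hne, hcompact.sSup_mem hne⟩
  have hccmem : ∀ t ∈ Z, connectedComponentIn Z t ∈ hfin.toFinset := by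
    intro t ht
    rw [Set.Finite.mem_toFinset]
    exact ⟨t, ht, rfl⟩
  have hselfmem : ∀ t ∈ Z, t ∈ connectedComponentIn Z t := fun t ht =>
    mem_connectedComponentIn ht
  -- distinct components are disjoint
  have heqcomp : ∀ S ∈ hfin.toFinset, ∀ T ∈ hfin.toFinset, ∀ z, z ∈ S → z ∈ T → S = T := by
    intro S hS T hT z hzS hzT
    rw [Set.Finite.mem_toFinset] at hS hT
    obtain ⟨t', _, rfl⟩ := hS
    obtain ⟨t'', _, rfl⟩ := hT
    exact (connectedComponentIn_eq hzS).trans (connectedComponentIn_eq hzT).symm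
  -- dichotomy: a component is entirely above or entirely below any non-zero u
  have hdich : ∀ S ∈ hfin.toFinset, ∀ u : ℝ, u ∉ Z → ¬ S ⊆ Ioi u → S ⊆ Iio u := by
    intro S hS u huZ hnsub
    obtain ⟨hne, hsubZ, _, hIcc⟩ := hcc S hS
    rw [Set.not_subset] at hnsub
    obtain ⟨t, htS, htu⟩ := hnsub
    simp only [mem_Ioi, not_lt] at htu
    intro s hsS
    by_contra hsu
    rw [mem_Iio, not_lt] at hsu
    have : u ∈ S := by
      rw [hIcc] at htS hsS ⊢
      exact ⟨le_trans htS.1 htu, le_trans hsu hsS.2⟩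
    exact huZ (hsubZ this)
  -- separation from the rest of Z on the right of a component
  have hopenR : ∀ S ∈ hfin.toFinset, ∃ δ > 0, ∀ s ∈ Ioo (sSup S) (sSup S + δ), s ∉ Z := by
    intro S hS
    obtain ⟨hne, hsubZ, hcl, hIcc⟩ := hcc S hS
    have hZS : IsClosed (Z \ S) := by
      have : Z \ S = ⋃ T ∈ hfin.toFinset.erase S, T := by
        ext z
        simp only [mem_diff, Finset.mem_erase, mem_iUnion, exists_prop]
        constructor
        · rintro ⟨hzZ, hzS⟩
          refine ⟨connectedComponentIn Z z, ⟨?_, hccmem z hzZ⟩, hselfmem z hzZ⟩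
          intro heq
          exact hzS (heq ▸ hselfmem z hzZ)
        · rintro ⟨T, ⟨hTne, hTmem⟩, hzT⟩
          obtain ⟨_, hTsubZ, _, _⟩ := hcc T hTmem
          exact ⟨hTsubZ hzT, fun hzS => hTne (heqcomp T hTmem S hS z hzT hzS)⟩
      rw [this]
      exact isClosed_biUnion_finset (fun T hT => (hcc T (Finset.mem_of_mem_erase hT)).2.2.1)
    have hsupS : sSup S ∈ S := by
      have hcompact : IsCompact S :=
        IsCompact.of_isClosed_subset isCompact_Icc hcl (hsubZ.trans hZsub)
      exact hcompact.sSup_mem hne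
    have hb : sSup S ∈ (Z \ S)ᶜ := fun h => h.2 hsupS
    obtain ⟨δ, hδ, hball⟩ := Metric.isOpen_iff.mp hZS.isOpen_compl _ hb
    refine ⟨δ, hδ, fun s hs hsZ => ?_⟩
    have hmb : s ∈ Metric.ball (sSup S) δ := by
      rw [Metric.mem_ball, Real.dist_eq, abs_lt]
      constructor
      · linarith [hs.1, hs.2]
      · linarith [hs.1, hs.2]
    have hsnot : s ∉ Z \ S := hball hmb
    have hsS : s ∈ S := by
      by_contra h
      exact hsnot ⟨hsZ, h⟩
    rw [hIcc] at hsS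
    exact absurd hsS.2 (not_le.mpr hs.1)
  -- the induction
  intro F
  induction F using Finset.strongInduction with
  | _ F ih =>
    intro u hu0 hu1 hgu hchar hFsub
    by_cases hFne : F.Nonempty
    · -- inductive step: remove the component with minimal infimum
      obtain ⟨S₀, hS₀F, hmin⟩ := F.exists_min_image sInf hFne
      have hS₀mem : S₀ ∈ hfin.toFinset := hFsub hS₀F
      obtain ⟨hS₀ne, hS₀Z, hS₀cl, hS₀Icc⟩ := hcc S₀ hS₀mem
      set a₀ := sInf S₀ with ha₀def
      set b₀ := sSup S₀ with hb₀def
      have ha₀S : a₀ ∈ S₀ := (hmemIS S₀ hS₀mem).1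
      have hb₀S : b₀ ∈ S₀ := (hmemIS S₀ hS₀mem).2
      have hab : a₀ ≤ b₀ := le_csSup (hbddA S₀ hS₀mem) ha₀S
      have ha₀Z : a₀ ∈ Z := hS₀Z ha₀S
      have hb₀Z : b₀ ∈ Z := hS₀Z hb₀S
      have ha₀pos : 0 < a₀ := lt_of_le_of_ne (hZsub ha₀Z).1 (fun h => h0Z (h ▸ ha₀Z))
      have hb₀lt1 : b₀ < 1 := lt_of_le_of_ne (hZsub hb₀Z).2 (fun h => h1Z (h ▸ hb₀Z))
      have hua₀ : u < a₀ := (hchar S₀ hS₀mem).mpr hS₀F ha₀S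
      -- other components of F lie strictly to the right of S₀
      have hsep : ∀ S ∈ F, S ≠ S₀ → b₀ < sInf S := by
        intro S hSF hne'
        have hinfS : sInf S ∈ S := (hmemIS S (hFsub hSF)).1
        by_contra hle
        push_neg at hle
        have hmemS₀ : sInf S ∈ S₀ := by
          rw [hS₀Icc]; exact ⟨hmin S hSF, hle⟩
        exact hne' (heqcomp S (hFsub hSF) S₀ hS₀mem (sInf S) hinfS hmemS₀)
      -- choose u' just to the right of S₀
      obtain ⟨δ, hδpos, hδ⟩ := hopenR S₀ hS₀mem
      have hexu' : ∃ u', b₀ < u' ∧ u' < 1 ∧ u' < b₀ + δ ∧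
          ∀ S ∈ F, S ≠ S₀ → u' < sInf S := by
        by_cases hE : (F.erase S₀).Nonempty
        · obtain ⟨S₁, hS₁, hmin1⟩ := (F.erase S₀).exists_min_image sInf hE
          have h1' : b₀ < sInf S₁ :=
            hsep S₁ (Finset.mem_of_mem_erase hS₁) (Finset.ne_of_mem_erase hS₁)
          set m := min δ (min (1 - b₀) (sInf S₁ - b₀)) with hmdef
          have hmpos : 0 < m := lt_min_iff.mpr ⟨hδpos, lt_min_iff.mpr ⟨by linarith, by linarith⟩⟩
          have hm1 : m ≤ δ := min_le_left _ _
          have hm2 : m ≤ 1 - b₀ := le_trans (min_le_right _ _) (min_le_left _ _)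
          have hm3 : m ≤ sInf S₁ - b₀ := le_trans (min_le_right _ _) (min_le_right _ _)
          refine ⟨b₀ + m / 2, by linarith, by linarith, by linarith, ?_⟩
          intro S hSF hne'
          have hS1le := hmin1 S (Finset.mem_erase.mpr ⟨hne', hSF⟩)
          linarith
        · rw [Finset.not_nonempty_iff_eq_empty] at hE
          set m := min δ (1 - b₀) with hmdef
          have hmpos : 0 < m := lt_min_iff.mpr ⟨hδpos, by linarith⟩
          have hm1 : m ≤ δ := min_le_left _ _
          have hm2 : m ≤ 1 - b₀ := min_le_right _ _
          refine ⟨b₀ + m / 2, by linarith, by linarith, by linarith, ?_⟩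
          intro S hSF hne'
          exact absurd (Finset.mem_erase.mpr ⟨hne', hSF⟩) (by rw [hE]; exact Finset.notMem_empty S)
      obtain ⟨u', hu'b, hu'1, hu'δ, hu'sep⟩ := hexu'
      have hu'0 : 0 ≤ u' := le_trans (hZsub hb₀Z).1 (le_of_lt hu'b)
      have hu'Z : u' ∉ Z := hδ u' ⟨hu'b, hu'δ⟩
      have hgu' : g u' ≠ c := fun h => hu'Z (hmemZ u' ⟨hu'0, le_of_lt hu'1⟩ h)
      have huu' : u < u' := lt_trans hua₀ (lt_of_le_of_lt hab hu'b)
      -- no zeros in the gap (b₀, u']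
      have hgapR : ∀ s, b₀ < s → s ≤ u' → g s ≠ c := by
        intro s hs1 hs2 h
        exact hδ s ⟨hs1, lt_of_le_of_lt hs2 hu'δ⟩
          (hmemZ s ⟨by linarith [(hZsub hb₀Z).1], by linarith⟩ h)
      -- no zeros in the gap (u, a₀)
      have hgapL : ∀ s, u < s → s < a₀ → g s ≠ c := by
        intro s hs1 hs2 h
        have hsZ : s ∈ Z := hmemZ s
          ⟨le_trans hu0 (le_of_lt hs1), le_trans (le_of_lt hs2) (hZsub ha₀Z).2⟩ h
        have hmem := hccmem s hsZ
        by_cases hsub : connectedComponentIn Z s ⊆ Ioi u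
        · have hF : connectedComponentIn Z s ∈ F := (hchar _ hmem).mp hsub
          have hmins := hmin _ hF
          have hle : sInf (connectedComponentIn Z s) ≤ s :=
            csInf_le (hbddS _ hmem) (hselfmem s hsZ)
          linarith
        · have := hdich _ hmem u (fun h' => hgu (hZc u h')) hsub
          exact absurd (this (hselfmem s hsZ)) (not_lt.mpr (le_of_lt hs1))
      -- sign just before S₀ ↔ sign at u
      have hBefore : ArcAboveBefore g c S₀ ↔ c < g u := by
        constructor
        · rintro ⟨ε, hε, H⟩
          set s := a₀ - min ε (a₀ - u) / 2 with hsdef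
          have hmpos : 0 < min ε (a₀ - u) := lt_min hε (by linarith)
          have hmle1 : min ε (a₀ - u) ≤ ε := min_le_left _ _
          have hmle2 : min ε (a₀ - u) ≤ a₀ - u := min_le_right _ _
          have hs1 : u < s := by rw [hsdef]; linarith
          have hs2 : s < a₀ := by rw [hsdef]; linarith
          have hsIcc : s ∈ Icc (0:ℝ) 1 := ⟨by linarith, by linarith [(hZsub ha₀Z).2]⟩
          have hcs : c < g s := H s ⟨⟨by rw [hsdef]; linarith, hs2⟩, hsIcc⟩
          have hsign := arc_signConst hg hu0 (le_of_lt hs1) hsIcc.2 (fun t ht => by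
            rcases eq_or_lt_of_le ht.1 with heq | hlt
            · exact heq ▸ hgu
            · exact hgapL t hlt (lt_of_le_of_lt ht.2 hs2))
          have hns : ¬ g s < c := not_lt.mpr (le_of_lt hcs)
          have hnu : ¬ g u < c := fun h => hns (hsign.mp h)
          exact lt_of_le_of_ne (not_lt.mp hnu) (Ne.symm hgu)
        · intro hcu
          refine ⟨a₀ - u, by linarith, fun s hs => ?_⟩
          obtain ⟨⟨hs1, hs2⟩, hsIcc⟩ := hs
          have hs1' : u < s := by linarith
          have hsign := arc_signConst hg hu0 (le_of_lt hs1') hsIcc.2 (fun t ht => by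
            rcases eq_or_lt_of_le ht.1 with heq | hlt
            · exact heq ▸ hgu
            · exact hgapL t hlt (lt_of_le_of_lt ht.2 hs2))
          have hnu : ¬ g u < c := not_lt.mpr (le_of_lt hcu)
          have hns : ¬ g s < c := fun h => hnu (hsign.mpr h)
          exact lt_of_le_of_ne (not_lt.mp hns) (Ne.symm (hgapL s hs1' hs2))
      -- sign just after S₀ ↔ sign at u'
      have hAfter : ArcAboveAfter g c S₀ ↔ c < g u' := by
        constructor
        · rintro ⟨ε, hε, H⟩
          set s := b₀ + min ε (u' - b₀) / 2 with hsdef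
          have hmpos : 0 < min ε (u' - b₀) := lt_min hε (by linarith)
          have hmle1 : min ε (u' - b₀) ≤ ε := min_le_left _ _
          have hmle2 : min ε (u' - b₀) ≤ u' - b₀ := min_le_right _ _
          have hs1 : b₀ < s := by rw [hsdef]; linarith
          have hs2 : s < u' := by rw [hsdef]; linarith
          have hsIcc : s ∈ Icc (0:ℝ) 1 := ⟨by linarith [(hZsub hb₀Z).1], by linarith⟩
          have hcs : c < g s := H s ⟨⟨hs1, by rw [hsdef]; linarith⟩, hsIcc⟩
          have hsign := arc_signConst hg hsIcc.1 (le_of_lt hs2) (le_of_lt hu'1) (fun t ht => by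
            exact hgapR t (lt_of_lt_of_le hs1 ht.1) ht.2)
          have hns : ¬ g s < c := not_lt.mpr (le_of_lt hcs)
          have hnu : ¬ g u' < c := fun h => hns (hsign.mpr h)
          exact lt_of_le_of_ne (not_lt.mp hnu) (Ne.symm hgu')
        · intro hcu
          refine ⟨u' - b₀, by linarith, fun s hs => ?_⟩
          obtain ⟨⟨hs1, hs2⟩, hsIcc⟩ := hs
          have hs2' : s < u' := by linarith
          have hsign := arc_signConst hg hsIcc.1 (le_of_lt hs2') (le_of_lt hu'1) (fun t ht => by
            exact hgapR t (lt_of_lt_of_le hs1 ht.1) ht.2)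
          have hnu : ¬ g u' < c := not_lt.mpr (le_of_lt hcu)
          have hns : ¬ g s < c := fun h => hnu (hsign.mp h)
          exact lt_of_le_of_ne (not_lt.mp hns) (Ne.symm (hgapR s hs1 (le_of_lt hs2')))
      have hglan : ArcGlancing g c S₀ ↔ ((g u < c) ↔ (g u' < c)) := by
        have e1 : (c < g u) ↔ ¬ (g u < c) :=
          ⟨fun h h' => absurd h (not_lt.mpr (le_of_lt h')),
           fun h => lt_of_le_of_ne (not_lt.mp h) (Ne.symm hgu)⟩
        have e2 : (c < g u') ↔ ¬ (g u' < c) :=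
          ⟨fun h h' => absurd h (not_lt.mpr (le_of_lt h')),
           fun h => lt_of_le_of_ne (not_lt.mp h) (Ne.symm hgu')⟩
        unfold ArcGlancing
        rw [hBefore, hAfter, e1, e2]
        tauto
      -- the characterization for the smaller finset
      have hch' : ∀ S ∈ hfin.toFinset, (S ⊆ Ioi u' ↔ S ∈ F.erase S₀) := by
        intro S hSmem
        constructor
        · intro hsub
          have hsubu : S ⊆ Ioi u := fun t ht => lt_trans huu' (hsub ht)
          refine Finset.mem_erase.mpr ⟨?_, (hchar S hSmem).mp hsubu⟩
          intro heq
          subst heq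
          exact absurd (hsub hb₀S) (not_lt.mpr (le_of_lt hu'b))
        · intro hSe
          obtain ⟨hne', hSF⟩ := Finset.mem_erase.mp hSe
          have hsep' := hu'sep S hSF hne'
          intro t ht
          exact lt_of_lt_of_le hsep' (csInf_le (hbddS S hSmem) ht)
      have hIH := ih (F.erase S₀) (Finset.erase_ssubset hS₀F) u' hu'0 hu'1 hgu' hch'
        (Finset.Subset.trans (Finset.erase_subset _ _) hFsub)
      -- combine
      rw [← Finset.add_sum_erase F _ hS₀F]
      by_cases hgl : ArcGlancing g c S₀
      · rw [if_pos hgl, Nat.even_add]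
        have h2 : Even 2 := ⟨1, rfl⟩
        have hPQ := hglan.mp hgl
        tauto
      · rw [if_neg hgl, Nat.even_add]
        have h1e : ¬ Even 1 := by decide
        have hPQ : ¬ ((g u < c) ↔ (g u' < c)) := fun h => hgl (hglan.mpr h)
        tauto
    · -- base case : F = ∅
      rw [Finset.not_nonempty_iff_eq_empty] at hFne
      subst hFne
      simp only [Finset.sum_empty, Even.zero, true_iff]
      apply arc_signConst hg hu0 (le_of_lt hu1) le_rfl
      intro t ht hgt
      rcases eq_or_lt_of_le ht.1 with heq | hlt
      · exact hgu (heq ▸ hgt)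
      · have htZ : t ∈ Z := hmemZ t ⟨le_trans hu0 ht.1, ht.2⟩ hgt
        have hmem := hccmem t htZ
        have hch := hchar _ hmem
        simp only [Finset.notMem_empty, iff_false] at hch
        have := hdich _ hmem u (fun h => hgu (hZc u h)) hch
        exact absurd (this (hselfmem t htZ)) (not_lt.mpr (le_of_lt hlt))

/-- An arc `Γ : [0,1] → ℝ³` whose endpoints are not in the plane
`P = {x | f x = c}` intersects `P` an even number of times iff its endpoints lie on
the same side of `P` (components of the preimage are counted, glancing ones twice).
In particular, if the endpoints are on the same side and `Γ` meets `P`, then `Γ`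
crosses `P` at least twice. -/
theorem arc_parity_crossings (Γ : ℝ → EuclideanSpace ℝ (Fin 3))
    (hΓ : ContinuousOn Γ (Icc (0 : ℝ) 1))
    (f : EuclideanSpace ℝ (Fin 3) →L[ℝ] ℝ) (hf : f ≠ 0) (c : ℝ)
    (h0 : f (Γ 0) ≠ c) (h1 : f (Γ 1) ≠ c)
    (Z : Set ℝ) (hZ : Z = {t ∈ Icc (0 : ℝ) 1 | f (Γ t) = c})
    (hfin : (arcComps Z).Finite) :
    (Even (∑ S ∈ hfin.toFinset,
        (if ArcGlancing (fun t => f (Γ t)) c S then 2 else 1)) ↔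
      ((f (Γ 0) < c) ↔ (f (Γ 1) < c))) ∧
    (((f (Γ 0) < c) ↔ (f (Γ 1) < c)) → Z.Nonempty →
      2 ≤ ∑ S ∈ hfin.toFinset,
        (if ArcGlancing (fun t => f (Γ t)) c S then 2 else 1)) := by
  have hg : ContinuousOn (fun t => f (Γ t)) (Icc (0:ℝ) 1) :=
    f.continuous.comp_continuousOn hΓ
  have hZsub : Z ⊆ Icc (0:ℝ) 1 := by rw [hZ]; intro t ht; exact ht.1
  have hchar : ∀ S ∈ hfin.toFinset, (S ⊆ Ioi (0:ℝ) ↔ S ∈ hfin.toFinset) := by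
    intro S hS
    refine ⟨fun _ => hS, fun _ => ?_⟩
    rw [Set.Finite.mem_toFinset] at hS
    obtain ⟨t, htZ, rfl⟩ := hS
    intro s hs
    have hsZ : s ∈ Z := connectedComponentIn_subset Z t hs
    have h0' : s ≠ 0 := by
      intro h
      subst h
      rw [hZ] at hsZ
      exact h0 hsZ.2
    exact lt_of_le_of_ne (hZsub hsZ).1 (Ne.symm h0')
  have hmain := arc_main (fun t => f (Γ t)) hg c h0 h1 Z hZ hfin hfin.toFinset 0
    le_rfl one_pos h0 hchar (Finset.Subset.refl _)
  refine ⟨hmain, fun hsame hne => ?_⟩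
  have heven := hmain.mpr hsame
  obtain ⟨t, ht⟩ := hne
  have hmem : connectedComponentIn Z t ∈ hfin.toFinset := by
    rw [Set.Finite.mem_toFinset]
    exact ⟨t, ht, rfl⟩
  have hone : 1 ≤ ∑ S ∈ hfin.toFinset,
      (if ArcGlancing (fun t => f (Γ t)) c S then 2 else 1) := by
    calc 1 ≤ (if ArcGlancing (fun t => f (Γ t)) c (connectedComponentIn Z t) then 2 else 1) := by
          split <;> omega
      _ ≤ _ := Finset.single_le_sum (f := fun S =>
          (if ArcGlancing (fun t => f (Γ t)) c S then 2 else 1))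
          (fun i _ => by positivity) hmem
  obtain ⟨k, hk⟩ := heven
  omega
end
end

section
/- If two closed curves A and B in ℝ³ have intersecting convex hulls, then the union A ∪ B has nonempty second hull: any point in conv(A) ∩ conv(B) lies in h₂(A ∪ B). -/
open Set
open scoped Classical

noncomputable section

variable {E : Type*} [NormedAddCommGroup E] [NormedSpace ℝ E]

/-- The connected components of the periodic level set `Z ⊆ ℝ`, with one
canonical representative chosen per period. -/
def circComps (Z : Set ℝ) : Set (Set ℝ) :=
  {S | ∃ t ∈ Z, S = connectedComponentIn Z t ∧ sInf S ∈ Ico (0 : ℝ) 1}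

/-- The arc of the curve just after the component `S` lies above the level `c`. -/
def AboveAfter (g : ℝ → ℝ) (c : ℝ) (S : Set ℝ) : Prop :=
  ∃ ε > 0, ∀ s ∈ Ioo (sSup S) (sSup S + ε), c < g s

/-- The arc of the curve just before the component `S` lies above the level `c`. -/
def AboveBefore (g : ℝ → ℝ) (c : ℝ) (S : Set ℝ) : Prop :=
  ∃ ε > 0, ∀ s ∈ Ioo (sInf S - ε) (sInf S), c < g s

/-- A glancing intersection: the arcs just before and just after the component `S`
lie on the same side of the level `c`; such components are counted twice. -/
def IsGlancing (g : ℝ → ℝ) (c : ℝ) (S : Set ℝ) : Prop :=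
  AboveBefore g c S ↔ AboveAfter g c S

/-- Number of intersections of the closed curve `K` (a `1`-periodic map `ℝ → E`)
with the hyperplane `{x | f x = c}`: components of the preimage are counted once,
glancing components twice, and a curve contained in the hyperplane counts as two
intersections. (Infinitely many components give an infinite count.) -/
def cutCount (K : ℝ → E) (f : E →L[ℝ] ℝ) (c : ℝ) : Cardinal :=
  if {t : ℝ | f (K t) = c} = univ then 2
  else Cardinal.mk (circComps {t : ℝ | f (K t) = c})
    + Cardinal.mk ({S ∈ circComps {t : ℝ | f (K t) = c} | IsGlancing (fun t => f (K t)) c S})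

/-- `K` cuts the hyperplane `{x | f x = c}` at least `m` times. -/
def CutsAtLeast (K : ℝ → E) (f : E →L[ℝ] ℝ) (c : ℝ) (m : ℕ) : Prop :=
  (m : Cardinal) ≤ cutCount K f c

/-- The `n`-th hull of the closed curve `K`: points `p` such that every hyperplane
through `p` is cut at least `2n` times by `K`. -/
def hull (K : ℝ → E) (n : ℕ) : Set E :=
  {p | ∀ f : E →L[ℝ] ℝ, f ≠ 0 → CutsAtLeast K f (f p) (2 * n)}

/-- The `n`-th hull of the two-component link `A ∪ B`: points `p` such that every
plane through `p` is cut at least `2n` times in total by the two components. -/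
def hull2 (A B : ℝ → E) (n : ℕ) : Set E :=
  {p | ∀ f : E →L[ℝ] ℝ, f ≠ 0 →
    ((2 * n : ℕ) : Cardinal) ≤ cutCount A f (f p) + cutCount B f (f p)}

/-!
Let `p` lie in the convex hull of a closed curve `K` and let `{f = f p}` be a plane through `p`.
The height `f ∘ K` has connected, hence convex, range, which therefore contains `f p`: the curve
meets the plane. If its periodic level set has a single component per period, then between that
component and its next translate the curve stays strictly on one side of the plane, so the
component is glancing and counts twice. Hence each curve cuts every plane through `p` at least
twice, and the two curves together at least four times.
-/

open Filter Topology
open scoped Cardinal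

section PeriodicSet

variable {Z : Set ℝ}

lemma add_int_mem_iff (hZ : Function.Periodic (· ∈ Z) 1) (x : ℝ) (n : ℤ) :
    x + n ∈ Z ↔ x ∈ Z := by
  simpa using Iff.of_eq (hZ.int_mul n x)

lemma image_add_int_connectedComponentIn (hZ : Function.Periodic (· ∈ Z) 1) {u : ℝ}
    (hu : u ∈ Z) (n : ℤ) :
    (· + (n : ℝ)) '' connectedComponentIn Z u = connectedComponentIn Z (u + n) := by
  have hZn : (· + (n : ℝ)) '' Z = Z := by
    ext x
    simpa [image_add_right] using add_int_mem_iff hZ x (-n)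
  simpa [hZn] using (Homeomorph.addRight (n : ℝ)).image_connectedComponentIn hu

lemma connectedComponentIn_subset_Ioo (hZ : Function.Periodic (· ∈ Z) 1) (hZu : Z ≠ univ)
    (t : ℝ) : ∃ x ∉ Z, connectedComponentIn Z t ⊆ Ioo x (x + 1) := by
  obtain ⟨x₀, hx₀⟩ := (ne_univ_iff_exists_notMem Z).1 hZu
  set x := x₀ + ⌊t - x₀⌋
  have hx : x ∉ Z := (add_int_mem_iff hZ x₀ _).not.2 hx₀
  refine ⟨x, hx, ?_⟩
  by_cases ht : t ∈ Z
  swap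
  · simp [connectedComponentIn_eq_empty ht]
  have hx₁ : x + 1 ∉ Z := by
    simpa [x, add_assoc] using (add_int_mem_iff hZ x₀ (⌊t - x₀⌋ + 1)).not.2 hx₀
  have hxt : x ≤ t := by linarith [Int.floor_le (t - x₀)]
  have htx : t ≤ x + 1 := by linarith [Int.lt_floor_add_one (t - x₀)]
  have hC := (isPreconnected_connectedComponentIn (x := t) (F := Z)).ordConnected
  have htC := mem_connectedComponentIn ht
  refine fun s hs => ⟨?_, ?_⟩
  · by_contra! hsx
    exact hx (connectedComponentIn_subset _ _ (hC.out hs htC ⟨hsx, hxt⟩))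
  · by_contra! hxs
    exact hx₁ (connectedComponentIn_subset _ _ (hC.out htC hs ⟨htx, hxs⟩))

lemma exists_add_int_mem_circComps (hZ : Function.Periodic (· ∈ Z) 1) (hZu : Z ≠ univ)
    {u : ℝ} (hu : u ∈ Z) : ∃ S ∈ circComps Z, ∃ m : ℤ, u + m ∈ S := by
  obtain ⟨x, -, hx⟩ := connectedComponentIn_subset_Ioo hZ hZu u
  set m : ℤ := -⌊sInf (connectedComponentIn Z u)⌋
  have hum : u + m ∈ Z := (add_int_mem_iff hZ u m).2 hu
  refine ⟨_, ⟨u + m, hum, rfl, ?_⟩, m, mem_connectedComponentIn hum⟩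
  have hInf := (OrderIso.addRight (m : ℝ)).map_csInf' ⟨u, mem_connectedComponentIn hu⟩
    (bddBelow_Ioo.mono hx)
  simp only [OrderIso.addRight_apply] at hInf
  rw [← image_add_int_connectedComponentIn hZ hu, ← hInf]
  constructor <;> simp [m] <;> linarith [Int.floor_le (sInf (connectedComponentIn Z u)),
    Int.lt_floor_add_one (sInf (connectedComponentIn Z u))]

lemma sSup_lt_sInf_add_one (hZ : Function.Periodic (· ∈ Z) 1) (hZc : IsClosed Z)
    (hZu : Z ≠ univ) {S : Set ℝ} (hS : S ∈ circComps Z) : sSup S < sInf S + 1 := by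
  obtain ⟨t, ht, rfl, -⟩ := hS
  obtain ⟨x, hx, hsub⟩ := connectedComponentIn_subset_Ioo hZ hZu t
  have hne : (connectedComponentIn Z t).Nonempty := ⟨t, mem_connectedComponentIn ht⟩
  have hInf : sInf (connectedComponentIn Z t) ∈ Z :=
    closure_minimal (connectedComponentIn_subset _ _) hZc
      (csInf_mem_closure hne (bddBelow_Ioo.mono hsub))
  have hxInf : x < sInf (connectedComponentIn Z t) :=
    (le_csInf hne fun s hs => (hsub hs).1.le).lt_of_ne fun h => hx (h ▸ hInf)
  have hSup : sSup (connectedComponentIn Z t) ≤ x + 1 := csSup_le hne fun s hs => (hsub hs).2.le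
  linarith

lemma notMem_of_circComps_eq_singleton (hZ : Function.Periodic (· ∈ Z) 1) (hZu : Z ≠ univ)
    {S : Set ℝ} (hS : circComps Z = {S}) {u : ℝ} (hu : u ∈ Ioo (sSup S) (sInf S + 1)) :
    u ∉ Z := by
  intro huZ
  obtain ⟨S', hS', m, hm⟩ := exists_add_int_mem_circComps hZ hZu huZ
  rw [hS, mem_singleton_iff] at hS'
  subst hS'
  obtain ⟨t, -, rfl, -⟩ : S' ∈ circComps Z := hS ▸ rfl
  obtain ⟨x, -, hsub⟩ := connectedComponentIn_subset_Ioo hZ hZu t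
  have hInf := csInf_le (bddBelow_Ioo.mono hsub) hm
  have hSup := le_csSup (bddAbove_Ioo.mono hsub) hm
  rcases lt_or_ge m 0 with hm₀ | hm₀
  · have : (m : ℝ) ≤ -1 := by exact_mod_cast Int.le_sub_one_of_lt hm₀
    linarith [hu.2]
  · have : (0 : ℝ) ≤ m := by exact_mod_cast hm₀
    linarith [hu.1]

end PeriodicSet

section Glancing

variable {g : ℝ → ℝ} {c : ℝ} {S : Set ℝ}

lemma aboveAfter_iff_eventually :
    AboveAfter g c S ↔ ∀ᶠ s in 𝓝[>] sSup S, c < g s := by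
  rw [Filter.Eventually, mem_nhdsGT_iff_exists_Ioo_subset]
  constructor
  · rintro ⟨ε, hε, h⟩
    exact ⟨sSup S + ε, by simpa using hε, h⟩
  · rintro ⟨u, hu, h⟩
    exact ⟨u - sSup S, sub_pos.2 hu, fun s hs => h (by simpa using hs)⟩

lemma aboveBefore_iff_eventually :
    AboveBefore g c S ↔ ∀ᶠ s in 𝓝[<] sInf S, c < g s := by
  rw [Filter.Eventually, mem_nhdsLT_iff_exists_Ioo_subset]
  constructor
  · rintro ⟨ε, hε, h⟩
    exact ⟨sInf S - ε, by simpa using hε, h⟩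
  · rintro ⟨l, hl, h⟩
    exact ⟨sInf S - l, sub_pos.2 hl, fun s hs => h (by simpa using hs)⟩

lemma Function.Periodic.eventually_nhdsLT_add_iff {p : ℝ} (hg : Function.Periodic g p)
    (a : ℝ) (P : ℝ → Prop) :
    (∀ᶠ s in 𝓝[<] (a + p), P (g s)) ↔ ∀ᶠ s in 𝓝[<] a, P (g s) := by
  rw [← Filter.map_add_right_nhdsLT, eventually_map]
  simp only [hg _]

lemma IsPreconnected.eventually_lt_iff_forall_lt {s : Set ℝ} (hs : IsPreconnected s)
    (hg : ContinuousOn g s) (hc : ∀ x ∈ s, g x ≠ c) {l : Filter ℝ} [l.NeBot]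
    (hl : s ∈ l) :
    (∀ᶠ x in l, c < g x) ↔ ∀ x ∈ s, c < g x := by
  refine ⟨fun h y hy => ?_, fun h => mem_of_superset hl h⟩
  obtain ⟨x, hcx, hx⟩ := (h.and hl).exists
  by_contra! hyc
  obtain ⟨z, hz, hgz⟩ := hs.intermediate_value hy hx hg ⟨hyc, hcx.le⟩
  exact hc z hz hgz

lemma isGlancing_of_forall_ne (hg : Continuous g) (hper : Function.Periodic g 1)
    (hS : sSup S < sInf S + 1) (hgap : ∀ s ∈ Ioo (sSup S) (sInf S + 1), g s ≠ c) :
    IsGlancing g c S := by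
  rw [IsGlancing, aboveBefore_iff_eventually, aboveAfter_iff_eventually,
    ← hper.eventually_nhdsLT_add_iff,
    isPreconnected_Ioo.eventually_lt_iff_forall_lt hg.continuousOn hgap (Ioo_mem_nhdsLT hS),
    isPreconnected_Ioo.eventually_lt_iff_forall_lt hg.continuousOn hgap (Ioo_mem_nhdsGT hS)]

end Glancing

lemma two_le_mk_circComps_add_mk_glancing {g : ℝ → ℝ} {c : ℝ} (hg : Continuous g)
    (hper : Function.Periodic g 1) (hc : ∃ t, g t = c) (hZu : {t | g t = c} ≠ univ) :
    2 ≤ #(circComps {t | g t = c}) + #{S ∈ circComps {t | g t = c} | IsGlancing g c S} := by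
  set Z := {t | g t = c}
  have hZ : Function.Periodic (· ∈ Z) 1 := hper.comp (· = c)
  have hZc : IsClosed Z := isClosed_eq hg continuous_const
  obtain ⟨t, ht⟩ := hc
  obtain ⟨S, hS, -⟩ := exists_add_int_mem_circComps hZ hZu ht
  rcases (circComps Z).subsingleton_or_nontrivial with hsub | hnt
  · have hone : circComps Z = {S} := hsub.eq_singleton_of_mem hS
    have hgl : IsGlancing g c S := isGlancing_of_forall_ne hg hper
      (sSup_lt_sInf_add_one hZ hZc hZu hS) fun u hu =>
        notMem_of_circComps_eq_singleton hZ hZu hone hu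
    have hglone : {S ∈ circComps Z | IsGlancing g c S} = {S} := by
      rw [hone, sep_eq_self_iff_mem_true]
      simpa using hgl
    rw [hglone, hone, Cardinal.mk_singleton]
    norm_num
  · exact (Cardinal.two_le_iff_one_lt.2 (Cardinal.one_lt_iff_nontrivial.2 hnt.coe_sort)).trans
      le_self_add

lemma two_le_cutCount {K : ℝ → E} (hK : Continuous K) (hper : Function.Periodic K 1)
    (f : E →L[ℝ] ℝ) {c : ℝ} (hc : ∃ t, f (K t) = c) : 2 ≤ cutCount K f c := by
  unfold cutCount
  split_ifs with h
  · exact le_rfl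
  · exact two_le_mk_circComps_add_mk_glancing (f.continuous.comp hK) (hper.comp f) hc h

lemma exists_apply_eq_of_mem_convexHull_range {X : Type*} [TopologicalSpace X]
    [PreconnectedSpace X] {K : X → E} (hK : Continuous K) (f : E →L[ℝ] ℝ) {p : E}
    (hp : p ∈ convexHull ℝ (range K)) : ∃ t, f (K t) = f p := by
  have hconv : Convex ℝ (range (f ∘ K)) := (isPreconnected_range (f.continuous.comp hK)).convex
  have hfp : f p ∈ convexHull ℝ (range (f ∘ K)) := by
    rw [range_comp, ← ContinuousLinearMap.coe_coe, ← LinearMap.image_convexHull]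
    exact mem_image_of_mem _ hp
  simpa [hconv.convexHull_eq] using hfp

lemma convexHull_range_subset_hull_one {K : ℝ → E} (hK : Continuous K)
    (hper : Function.Periodic K 1) : convexHull ℝ (range K) ⊆ hull K 1 := fun p hp f _ => by
  simpa [CutsAtLeast] using
    two_le_cutCount hK hper f (exists_apply_eq_of_mem_convexHull_range hK f hp)

lemma hull_inter_hull_subset_hull2 (K L : ℝ → E) (m n : ℕ) :
    hull K m ∩ hull L n ⊆ hull2 K L (m + n) := by
  rintro p ⟨hK, hL⟩ f hf
  simpa [CutsAtLeast, mul_add] using add_le_add (hK f hf) (hL f hf)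

/-- If two closed curves `A` and `B` in `ℝ³` have intersecting
convex hulls, then any point of `conv(A) ∩ conv(B)` lies in `h₂(A ∪ B)`; in
particular the second hull of the union is nonempty. -/
theorem secondHull_of_intersecting_convexHulls
    (A B : ℝ → EuclideanSpace ℝ (Fin 3))
    (hA : Continuous A) (hAper : Function.Periodic A 1)
    (hB : Continuous B) (hBper : Function.Periodic B 1)
    (hmeet : (convexHull ℝ (Set.range A) ∩ convexHull ℝ (Set.range B)).Nonempty) :
    convexHull ℝ (Set.range A) ∩ convexHull ℝ (Set.range B) ⊆ hull2 A B 2 ∧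
    (hull2 A B 2).Nonempty := by
  have hsub : convexHull ℝ (Set.range A) ∩ convexHull ℝ (Set.range B) ⊆ hull2 A B 2 :=
    (inter_subset_inter (convexHull_range_subset_hull_one hA hAper)
      (convexHull_range_subset_hull_one hB hBper)).trans (hull_inter_hull_subset_hull2 A B 1 1)
  exact ⟨hsub, hmeet.mono hsub⟩
end
end

section
/- The cone angle of a closed rectifiable curve K from any point p not on K is at most the total curvature of K: the length of the radial projection of K to the unit sphere centered at p is at most the total curvature of K. -/
open Set
open scoped ENNReal

noncomputable section

/-- The total curvature (in the sense of Milnor) of a closed curve `K`, given as a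
`1`-periodic map `ℝ → ℝ³`: the supremum, over all polygons inscribed in one period
of `K` (with nondegenerate edges), of the sum of the exterior angles. -/
def totalCurvature (K : ℝ → EuclideanSpace ℝ (Fin 3)) : ℝ≥0∞ :=
  ⨆ (n : ℕ) (t : Fin (n + 3) → ℝ) (_ : StrictMono t)
    (_ : ∀ i, t i ∈ Ico (0 : ℝ) 1) (_ : ∀ i, K (t (i + 1)) ≠ K (t i)),
    ∑ i : Fin (n + 3),
      ENNReal.ofReal
        (InnerProductGeometry.angle
          (K (t (i + 1)) - K (t i)) (K (t (i + 2)) - K (t (i + 1))))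

/-!
Join the vertices `w i` of a closed polygon to `p`. In the triangle `w i, p, w (i + 1)` the
angle at `p` is `π` minus the two base angles, and at each vertex `w (i + 1)` the interior angle
of the polygon is at most the sum of the two base angles meeting there. Summing over `i`, the
angle subtended at `p` by the polygon is at most its total exterior angle. On the unit sphere a
chord is shorter than the arc it subtends, so every inscribed approximation of the length of the
radial projection is bounded by such an angle sum. Vertices repeating their predecessor
contribute nothing and are dropped, and a polygon with two vertices is refined to a triangle by
the intermediate value theorem, because total curvature only sees polygons with at least three
vertices.
-/

open Real InnerProductGeometry NormedSpace Finset
open scoped EuclideanGeometry RealInnerProductSpace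

section Angles

variable {V : Type*} [NormedAddCommGroup V] [InnerProductSpace ℝ V]

theorem InnerProductGeometry.norm_sub_le_angle_of_norm_eq_one {x y : V} (hx : ‖x‖ = 1)
    (hy : ‖y‖ = 1) : ‖x - y‖ ≤ angle x y := by
  have hcos : cos (angle x y) = ⟪x, y⟫ := by simp [cos_angle, hx, hy]
  have hsq : ‖x - y‖ ^ 2 ≤ angle x y ^ 2 := by
    rw [norm_sub_sq_real, hx, hy, ← hcos]
    linarith [one_sub_sq_div_two_le_cos (x := angle x y)]
  exact (pow_le_pow_iff_left₀ (norm_nonneg _) (angle_nonneg x y) two_ne_zero).mp hsq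

theorem InnerProductGeometry.norm_normalize_sub_normalize_le_angle (x y : V) :
    ‖normalize x - normalize y‖ ≤ angle x y := by
  rcases eq_or_ne x 0 with rfl | hx
  · rcases eq_or_ne y 0 with rfl | hy
    · simp; positivity
    · simp [norm_normalize hy]; linarith [pi_gt_three]
  rcases eq_or_ne y 0 with rfl | hy
  · simp [norm_normalize hx]; linarith [pi_gt_three]
  simpa [angle_normalize_left, angle_normalize_right] using
    norm_sub_le_angle_of_norm_eq_one (norm_normalize hx) (norm_normalize hy)

variable {P : Type*} [MetricSpace P] [NormedAddTorsor V P]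

theorem EuclideanGeometry.sum_angle_le_sum_pi_sub_angle {N : ℕ} [NeZero N] (w : Fin N → P)
    {p : P} (hp : ∀ i, w i ≠ p) :
    ∑ i, ∠ (w i) p (w (i + 1)) ≤ ∑ i, (π - ∠ (w i) (w (i + 1)) (w (i + 2))) := by
  have htriangle (i : Fin N) : ∠ (w i) p (w (i + 1)) =
      π - ∠ p (w i) (w (i + 1)) - ∠ (w i) (w (i + 1)) p := by
    linarith [angle_add_angle_add_angle_eq_pi (w (i + 1)) (hp i), angle_comm (w (i + 1)) p (w i)]
  have hvertex (i : Fin N) : π - ∠ (w i) (w (i + 1)) p - ∠ p (w (i + 1)) (w (i + 2)) ≤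
      π - ∠ (w i) (w (i + 1)) (w (i + 2)) := by
    linarith [angle_le_angle_add_angle (w (i + 1)) (w i) p (w (i + 2))]
  have hshift : ∑ i, ∠ p (w (i + 1)) (w (i + 2)) = ∑ i, ∠ p (w i) (w (i + 1)) :=
    Fintype.sum_equiv (Equiv.addRight 1) _ _ fun i => by
      rw [show i + 2 = i + 1 + 1 by grind]; rfl
  calc ∑ i, ∠ (w i) p (w (i + 1))
      = ∑ i, (π - ∠ (w i) (w (i + 1)) p - ∠ p (w (i + 1)) (w (i + 2))) := by
        simp only [htriangle, sum_sub_distrib, hshift]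
        ring
    _ ≤ _ := sum_le_sum fun i _ => hvertex i

end Angles

theorem exists_mem_Ioo_ne_ne {X : Type*} [MetricSpace X] {f : ℝ → X} {a b : ℝ} (hab : a ≤ b)
    (hf : ContinuousOn f (Icc a b)) (hne : f a ≠ f b) :
    ∃ s ∈ Ioo a b, f s ≠ f a ∧ f s ≠ f b := by
  have hpos : 0 < dist (f b) (f a) := dist_pos.2 hne.symm
  have hcont : ContinuousOn (fun x => dist (f x) (f a)) (Icc a b) :=
    continuous_dist.comp_continuousOn (hf.prodMk continuousOn_const)
  obtain ⟨s, hs, hmid⟩ := intermediate_value_Icc hab hcont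
    (show dist (f b) (f a) / 2 ∈ Icc (dist (f a) (f a)) (dist (f b) (f a)) by
      rw [dist_self]; constructor <;> linarith)
  have hsa : f s ≠ f a := fun h => by simp only [h, dist_self] at hmid; linarith
  have hsb : f s ≠ f b := fun h => by simp only [h] at hmid; linarith
  exact ⟨s, ⟨hs.1.lt_of_ne fun h => hsa (h ▸ rfl), hs.2.lt_of_ne fun h => hsb (h ▸ rfl)⟩, hsa, hsb⟩

def eraseIdx {α : Type*} (x : ℕ → α) (j : ℕ) : ℕ → α := fun i => x (if i < j then i else i + 1)

section EraseIdx

variable {α : Type*} {x : ℕ → α} {i j : ℕ}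

theorem eraseIdx_of_lt (h : i < j) : eraseIdx x j i = x i := by
  simp [eraseIdx, h]

theorem eraseIdx_of_le (h : j ≤ i) : eraseIdx x j i = x (i + 1) := by
  simp [eraseIdx, Nat.not_lt.mpr h]

theorem Monotone.eraseIdx [Preorder α] (hx : Monotone x) (j : ℕ) : Monotone (eraseIdx x j) :=
  fun a b hab => hx (by split_ifs <;> omega)

/-- Stated without subtraction, so that it holds in any additive monoid. -/
theorem sum_range_succ_add_eq_sum_range_eraseIdx {β : Type*} [AddCommMonoid β]
    (G : α → α → β) (x : ℕ → α) {d M : ℕ} (hd : d < M) :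
    ∑ i ∈ range (M + 1), G (x i) (x (i + 1)) + G (x d) (x (d + 2)) =
      ∑ i ∈ range M, G (eraseIdx x (d + 1) i) (eraseIdx x (d + 1) (i + 1)) +
        G (x d) (x (d + 1)) + G (x (d + 1)) (x (d + 2)) := by
  induction M, hd using Nat.le_induction with
  | base =>
    have hlow : ∑ i ∈ range d, G (eraseIdx x (d + 1) i) (eraseIdx x (d + 1) (i + 1)) =
        ∑ i ∈ range d, G (x i) (x (i + 1)) :=
      sum_congr rfl fun i hi => by
        have := mem_range.mp hi
        rw [eraseIdx_of_lt (by omega), eraseIdx_of_lt (by omega)]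
    rw [sum_range_succ, sum_range_succ, sum_range_succ, hlow, eraseIdx_of_lt d.lt_succ_self,
      eraseIdx_of_le le_rfl]
    abel
  | succ M hM ih =>
    rw [sum_range_succ _ (M + 1), add_right_comm, ih, sum_range_succ _ M,
      eraseIdx_of_le (by omega), eraseIdx_of_le (by omega)]
    abel

end EraseIdx

section ClosedCurve

variable {K : ℝ → EuclideanSpace ℝ (Fin 3)} {p : EuclideanSpace ℝ (Fin 3)}

theorem ofReal_sum_angle_le_totalCurvature (hp : p ∉ range K) {n : ℕ} {t : Fin (n + 3) → ℝ}
    (ht : StrictMono t) (ht01 : ∀ i, t i ∈ Ico (0 : ℝ) 1) (hK : ∀ i, K (t (i + 1)) ≠ K (t i)) :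
    ENNReal.ofReal (∑ i, ∠ (K (t i)) p (K (t (i + 1)))) ≤ totalCurvature K := by
  have hturn (i : Fin (n + 3)) : angle (K (t (i + 1)) - K (t i)) (K (t (i + 2)) - K (t (i + 1))) =
      π - ∠ (K (t i)) (K (t (i + 1))) (K (t (i + 2))) := by
    rw [← neg_sub, angle_neg_left]
    rfl
  calc ENNReal.ofReal (∑ i, ∠ (K (t i)) p (K (t (i + 1))))
      ≤ ENNReal.ofReal (∑ i, angle (K (t (i + 1)) - K (t i)) (K (t (i + 2)) - K (t (i + 1)))) := by
        simp only [hturn]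
        exact ENNReal.ofReal_le_ofReal
          (EuclideanGeometry.sum_angle_le_sum_pi_sub_angle (K ∘ t) fun i h => hp ⟨t i, h⟩)
    _ = ∑ i, ENNReal.ofReal
          (angle (K (t (i + 1)) - K (t i)) (K (t (i + 2)) - K (t (i + 1)))) :=
        ENNReal.ofReal_sum_of_nonneg fun i _ => angle_nonneg _ _
    _ ≤ totalCurvature K := le_iSup₂_of_le n t <| le_iSup₂_of_le ht ht01 <| le_iSup_of_le hK le_rfl

theorem ofReal_sum_range_angle_le_totalCurvature_of_forall_ne (hK1 : K 1 = K 0)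
    (hp : p ∉ range K) {n : ℕ} {v : ℕ → ℝ} (hv : Monotone v) (hv01 : ∀ i, v i ∈ Icc (0 : ℝ) 1)
    (hv0 : v 0 = 0) (hvn : v (n + 3) = 1) (hKv : ∀ i < n + 3, K (v (i + 1)) ≠ K (v i)) :
    ENNReal.ofReal (∑ i ∈ range (n + 3), ∠ (K (v i)) p (K (v (i + 1)))) ≤ totalCurvature K := by
  have hlt : ∀ i < n + 3, v i < v (i + 1) := fun i hi =>
    (hv i.le_succ).lt_of_ne fun h => hKv i hi (by rw [h])
  have hwrap (i : Fin (n + 3)) : K (v (i + 1 : Fin (n + 3))) = K (v (i + 1)) := by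
    rw [Fin.val_add_one]
    split_ifs with h
    · simp [h, hv0, hvn, hK1]
    · rfl
  have := ofReal_sum_angle_le_totalCurvature (t := fun i => v i) hp
    (Fin.strictMono_iff_lt_succ.mpr fun i => hlt i (by omega))
    (fun i => ⟨(hv01 i).1, (hlt i i.isLt).trans_le ((hv (by omega)).trans_eq hvn)⟩)
    (fun i => by rw [hwrap]; exact hKv i i.isLt)
  simp only [hwrap] at this
  rwa [Fin.sum_univ_eq_sum_range (fun i => ∠ (K (v i)) p (K (v (i + 1))))] at this

theorem ofReal_angle_add_angle_le_totalCurvature (hK : Continuous K) (hK1 : K 1 = K 0)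
    (hp : p ∉ range K) {a : ℝ} (ha : a ∈ Icc (0 : ℝ) 1) (hKa : K a ≠ K 0) :
    ENNReal.ofReal (∠ (K 0) p (K a) + ∠ (K a) p (K 1)) ≤ totalCurvature K := by
  obtain ⟨s, hs, hs0, hsa⟩ := exists_mem_Ioo_ne_ne ha.1 hK.continuousOn hKa.symm
  let v : ℕ → ℝ := fun i => if i = 0 then 0 else if i = 1 then s else if i = 2 then a else 1
  have hv : Monotone v := monotone_nat_of_le_succ fun i => by
    rcases i with _ | _ | _ | i <;> simp [v, hs.1.le, hs.2.le, ha.2]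
  have hv01 (i : ℕ) : v i ∈ Icc (0 : ℝ) 1 := by
    simp only [v]; split_ifs <;> simp [hs.1.le, (hs.2.trans_le ha.2).le, ha.1, ha.2]
  have hKv : ∀ i < 0 + 3, K (v (i + 1)) ≠ K (v i) := by
    intro i hi
    interval_cases i <;> simp [v, hs0, hsa.symm, hK1, hKa.symm]
  calc ENNReal.ofReal (∠ (K 0) p (K a) + ∠ (K a) p (K 1))
      ≤ ENNReal.ofReal (∑ i ∈ range (0 + 3), ∠ (K (v i)) p (K (v (i + 1)))) := by
        refine ENNReal.ofReal_le_ofReal ?_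
        simp only [sum_range_succ, Finset.range_zero, sum_empty, zero_add]
        change _ ≤ ∠ (K 0) p (K s) + ∠ (K s) p (K a) + ∠ (K a) p (K 1)
        linarith [EuclideanGeometry.angle_le_angle_add_angle p (K 0) (K s) (K a)]
    _ ≤ totalCurvature K :=
      ofReal_sum_range_angle_le_totalCurvature_of_forall_ne hK1 hp hv hv01 rfl rfl hKv

theorem sum_range_angle_eq_sum_range_angle_eraseIdx (hp : p ∉ range K) {v : ℕ → ℝ} {d M : ℕ}
    (hd : d < M) (hKd : K (v (d + 1)) = K (v d) ∨ K (v (d + 1)) = K (v (d + 2))) :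
    ∑ i ∈ range (M + 1), ∠ (K (v i)) p (K (v (i + 1))) =
      ∑ i ∈ range M, ∠ (K (eraseIdx v (d + 1) i)) p (K (eraseIdx v (d + 1) (i + 1))) := by
  have hadd : ∠ (K (v d)) p (K (v (d + 1))) + ∠ (K (v (d + 1))) p (K (v (d + 2))) =
      ∠ (K (v d)) p (K (v (d + 2))) := by
    rcases hKd with h | h <;> rw [h] <;>
      simp [EuclideanGeometry.angle_self_of_ne fun h => hp ⟨_, h⟩]
  linarith [sum_range_succ_add_eq_sum_range_eraseIdx (fun a b => ∠ (K a) p (K b)) v hd]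

theorem ofReal_sum_range_angle_le_totalCurvature_of_closed (hK : Continuous K) (hK1 : K 1 = K 0)
    (hp : p ∉ range K) (M : ℕ) {v : ℕ → ℝ} (hv : Monotone v) (hv01 : ∀ i, v i ∈ Icc (0 : ℝ) 1)
    (hv0 : v 0 = 0) (hvM : v M = 1) :
    ENNReal.ofReal (∑ i ∈ range M, ∠ (K (v i)) p (K (v (i + 1)))) ≤ totalCurvature K := by
  induction M using Nat.strong_induction_on generalizing v with | _ M ih =>
  rcases Nat.lt_or_ge M 2 with hM | hM
  · interval_cases M <;>
      simp [hv0, hvM, hK1, EuclideanGeometry.angle_self_of_ne fun h => hp ⟨0, h⟩]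
  by_cases hdeg : ∃ e < M, K (v (e + 1)) = K (v e)
  · obtain ⟨e, he, hKe⟩ := hdeg
    -- the dropped vertex `d + 1` is interior, so that the endpoints `0` and `1` survive
    obtain ⟨d, hdM, hKd⟩ : ∃ d, d + 2 ≤ M ∧
        (K (v (d + 1)) = K (v d) ∨ K (v (d + 1)) = K (v (d + 2))) := by
      rcases Nat.lt_or_ge (e + 1) M with h | h
      · exact ⟨e, h, Or.inl hKe⟩
      · refine ⟨e - 1, by omega, Or.inr ?_⟩
        rw [show e - 1 + 1 = e by omega, show e - 1 + 2 = e + 1 by omega, hKe]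
    obtain ⟨M, rfl⟩ : ∃ M', M = M' + 1 := ⟨M - 1, by omega⟩
    rw [sum_range_angle_eq_sum_range_angle_eraseIdx hp (by omega) hKd]
    exact ih M M.lt_succ_self (hv.eraseIdx _) (fun i => hv01 _)
      (by rw [eraseIdx_of_lt d.succ_pos, hv0]) (by rw [eraseIdx_of_le (by omega), hvM])
  push Not at hdeg
  obtain ⟨n, rfl⟩ : ∃ n, M = n + 2 := ⟨M - 2, by omega⟩
  rcases n with _ | n
  · simpa [sum_range_succ, hv0, hvM] using ofReal_angle_add_angle_le_totalCurvature hK hK1 hp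
      (hv01 1) (by simpa [hv0] using hdeg 0 two_pos)
  · exact ofReal_sum_range_angle_le_totalCurvature_of_forall_ne hK1 hp hv hv01 hv0 hvM hdeg

theorem ofReal_sum_range_angle_le_totalCurvature (hK : Continuous K) (hK1 : K 1 = K 0)
    (hp : p ∉ range K) {u : ℕ → ℝ} (hu : Monotone u) (hu01 : ∀ i, u i ∈ Icc (0 : ℝ) 1) (n : ℕ) :
    ENNReal.ofReal (∑ i ∈ range n, ∠ (K (u i)) p (K (u (i + 1)))) ≤ totalCurvature K := by
  let v : ℕ → ℝ := fun i => if i = 0 then 0 else if i ≤ n + 1 then u (i - 1) else 1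
  have hv : Monotone v := monotone_nat_of_le_succ fun i => by
    simp only [v, Nat.add_one_ne_zero, if_false]
    split_ifs <;> first | omega | exact hu (by omega) | simp_all
  have hv01 (i : ℕ) : v i ∈ Icc (0 : ℝ) 1 := by
    simp only [v]; split_ifs <;> simp [hu01]
  have hvu (i : ℕ) (hi : i < n) :
      ∠ (K (v (i + 1))) p (K (v (i + 1 + 1))) = ∠ (K (u i)) p (K (u (i + 1))) := by
    simp only [v, Nat.add_one_ne_zero, if_false, if_pos (show i + 1 ≤ n + 1 by omega),
      if_pos (show i + 1 + 1 ≤ n + 1 by omega), Nat.add_sub_cancel]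
  calc ENNReal.ofReal (∑ i ∈ range n, ∠ (K (u i)) p (K (u (i + 1))))
      ≤ ENNReal.ofReal (∑ i ∈ range (n + 2), ∠ (K (v i)) p (K (v (i + 1)))) := by
        refine ENNReal.ofReal_le_ofReal ?_
        rw [sum_range_succ', sum_range_succ, sum_congr rfl fun i hi => hvu i (mem_range.mp hi)]
        linarith [EuclideanGeometry.angle_nonneg (K (v 0)) p (K (v 1)),
          EuclideanGeometry.angle_nonneg (K (v (n + 1))) p (K (v (n + 1 + 1)))]
    _ ≤ totalCurvature K :=
      ofReal_sum_range_angle_le_totalCurvature_of_closed hK hK1 hp (n + 2) hv hv01 rfl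
        (by simp [v])

end ClosedCurve

theorem coneAngle_le_totalCurvature_general
    (K : ℝ → EuclideanSpace ℝ (Fin 3))
    (hK : Continuous K) (hper : Function.Periodic K 1)
    (p : EuclideanSpace ℝ (Fin 3)) (hpK : p ∉ Set.range K) :
    eVariationOn (fun t => ‖K t - p‖⁻¹ • (K t - p)) (Icc (0 : ℝ) 1) ≤
      totalCurvature K := by
  refine iSup_le fun ⟨n, u, hu, hu01⟩ => ?_
  calc ∑ i ∈ range n, edist (normalize (K (u (i + 1)) - p)) (normalize (K (u i) - p))
      ≤ ∑ i ∈ range n, ENNReal.ofReal (∠ (K (u i)) p (K (u (i + 1)))) := by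
        refine sum_le_sum fun i _ => ?_
        rw [edist_dist, dist_eq_norm, EuclideanGeometry.angle_comm]
        exact ENNReal.ofReal_le_ofReal (norm_normalize_sub_normalize_le_angle _ _)
    _ = ENNReal.ofReal (∑ i ∈ range n, ∠ (K (u i)) p (K (u (i + 1)))) :=
        (ENNReal.ofReal_sum_of_nonneg fun i _ => EuclideanGeometry.angle_nonneg _ _ _).symm
    _ ≤ totalCurvature K :=
      ofReal_sum_range_angle_le_totalCurvature hK (by simpa using hper 0) hpK hu hu01 n

/-- The cone angle of a closed rectifiable curve `K` of finite
total curvature, seen from any point `p` not on `K` — i.e. the length of the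
radial projection of `K` to the unit sphere about `p` — is at most the total
curvature of `K`. -/
theorem coneAngle_le_totalCurvature
    (K : ℝ → EuclideanSpace ℝ (Fin 3))
    (hK : Continuous K) (hper : Function.Periodic K 1)
    (hrect : eVariationOn K (Icc (0 : ℝ) 1) ≠ ⊤)
    (hfin : totalCurvature K ≠ ⊤)
    (p : EuclideanSpace ℝ (Fin 3)) (hpK : p ∉ Set.range K) :
    eVariationOn (fun t => ‖K t - p‖⁻¹ • (K t - p)) (Icc (0 : ℝ) 1) ≤
      totalCurvature K :=
  coneAngle_le_totalCurvature_general K hK hper p hpK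
end
end

section
/- If a closed curve K in ℝ³ admits a height function (a linear functional) with exactly n local minima and n local maxima on the domain circle, then the (n+1)-st hull of K is empty. -/
/-! Finitely many local extrema of the height `g = ℓ ∘ K` on a period make every point of a level
set isolated (by Rolle's theorem), so every component of a level set is a single point `t`.
Between `t` and the next return of `g` to the level there is a local extremum (Rolle again), and a
glancing level point is itself a local extremum. These extrema are pairwise distinct modulo `1`,
so every plane orthogonal to `ℓ` is cut at most `#minima + #maxima = 2n` times. -/

open Set
open scoped Classical

noncomputable section

variable {E : Type*} [NormedAddCommGroup E] [NormedSpace ℝ E]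

open Topology Filter Function
open scoped Cardinal

section PeriodicExtrema

variable {g : ℝ → ℝ}

theorem Function.Periodic.isLocalExtr_fract (hper : Periodic g 1) {x : ℝ}
    (h : IsLocalExtr g x) : IsLocalExtr g (Int.fract x) := by
  have hshift : g ∘ (· + (⌊x⌋ : ℝ)) = g := funext fun y => by simpa using hper.int_mul ⌊x⌋ y
  rw [← Int.fract_add_floor x] at h
  rw [← hshift]
  exact h.comp_tendsto (g := (· + (⌊x⌋ : ℝ))) ((continuous_add_const _).tendsto _)

theorem Function.Periodic.map_fract (hper : Periodic g 1) (x : ℝ) : g (Int.fract x) = g x := by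
  rw [← Int.self_sub_floor, ← mul_one (⌊x⌋ : ℝ), hper.sub_int_mul_eq]

theorem injOn_fract_Ioo (a : ℝ) : InjOn Int.fract (Ioo a (a + 1)) := by
  intro x hx y hy hxy
  obtain ⟨k, hk⟩ := Int.fract_eq_fract.1 hxy
  have hk1 : |(k : ℝ)| < 1 := by
    rw [← hk, abs_lt]; constructor <;> linarith [hx.1, hx.2, hy.1, hy.2]
  have hk0 : k = 0 := Int.abs_lt_one_iff.1 (by exact_mod_cast hk1)
  simpa [hk0, sub_eq_zero] using hk

theorem Function.Periodic.eventually_not_isLocalExtr (hper : Periodic g 1)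
    (hfin : {t ∈ Ico (0 : ℝ) 1 | IsLocalExtr g t}.Finite) (b : ℝ) :
    ∀ᶠ x in 𝓝[≠] b, ¬IsLocalExtr g x := by
  set F := {x ∈ Ioo (b - 1 / 2) (b - 1 / 2 + 1) | x ≠ b ∧ IsLocalExtr g x}
  have hF : F.Finite := by
    refine Finite.of_finite_image (hfin.subset ?_)
      ((injOn_fract_Ioo (b - 1 / 2)).mono fun x hx => hx.1)
    rintro _ ⟨x, ⟨-, -, hx⟩, rfl⟩
    exact ⟨⟨Int.fract_nonneg x, Int.fract_lt_one x⟩, hper.isLocalExtr_fract hx⟩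
  have hb : b ∉ F := fun h => h.2.1 rfl
  have hIoo : Ioo (b - 1 / 2) (b - 1 / 2 + 1) ∈ 𝓝 b := Ioo_mem_nhds (by linarith) (by linarith)
  filter_upwards [nhdsWithin_le_nhds (hF.isClosed.compl_mem_nhds hb), nhdsWithin_le_nhds hIoo,
    self_mem_nhdsWithin] with x hxF hx hxb hext
  exact hxF ⟨hx, hxb, hext⟩

end PeriodicExtrema

section LevelSets

variable {g : ℝ → ℝ} {c : ℝ}

theorem eventually_nhds_of_nhdsLT_of_nhdsGT {P : ℝ → Prop} {t : ℝ} (hl : ∀ᶠ s in 𝓝[<] t, P s)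
    (ht : P t) (hr : ∀ᶠ s in 𝓝[>] t, P s) : ∀ᶠ s in 𝓝 t, P s := by
  rw [← nhdsNE_sup_pure, ← nhdsLT_sup_nhdsGT]
  exact ⟨⟨hl, hr⟩, ht⟩

theorem eventually_lt_or_eventually_gt {l : Filter ℝ} {s : Set ℝ} (hs : IsPreconnected s)
    (hsl : s ∈ l) (hg : ContinuousOn g s) (hne : ∀ x ∈ s, g x ≠ c) :
    (∀ᶠ x in l, c < g x) ∨ ∀ᶠ x in l, g x < c := by
  by_cases habove : ∃ x ∈ s, c < g x
  · obtain ⟨x, hx, hcx⟩ := habove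
    refine Or.inl (mem_of_superset hsl fun y hy => show c < g y from ?_)
    by_contra! hyc
    obtain ⟨z, hz, hgz⟩ := hs.intermediate_value hy hx hg ⟨hyc, hcx.le⟩
    exact hne z hz hgz
  · simp only [not_exists, not_and, not_lt] at habove
    exact Or.inr (mem_of_superset hsl fun y hy => (habove y hy).lt_of_ne (hne y hy))

theorem eventually_ne_of_eventually_not_isLocalExtr (hg : Continuous g) {b : ℝ}
    (h : ∀ᶠ x in 𝓝[≠] b, ¬IsLocalExtr g x) : ∀ᶠ x in 𝓝[≠] b, g x ≠ g b := by
  rw [← nhdsLT_sup_nhdsGT, eventually_sup] at h ⊢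
  obtain ⟨hl, hr⟩ := h
  constructor
  · obtain ⟨u, hu, hsub⟩ := mem_nhdsLT_iff_exists_Ioo_subset.1 hl
    filter_upwards [Ioo_mem_nhdsLT hu] with x hx heq
    obtain ⟨y, hy, hext⟩ := exists_isLocalExtr_Ioo hx.2 hg.continuousOn heq
    exact hsub ⟨hx.1.trans hy.1, hy.2⟩ hext
  · obtain ⟨u, hu, hsub⟩ := mem_nhdsGT_iff_exists_Ioo_subset.1 hr
    filter_upwards [Ioo_mem_nhdsGT hu] with x hx heq
    obtain ⟨y, hy, hext⟩ := exists_isLocalExtr_Ioo hx.1 hg.continuousOn heq.symm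
    exact hsub ⟨hy.1, hy.2.trans hx.2⟩ hext

theorem connectedComponentIn_eq_singleton_of_eventually_notMem {Z : Set ℝ} {t : ℝ} (ht : t ∈ Z)
    (hiso : ∀ᶠ x in 𝓝[≠] t, x ∉ Z) : connectedComponentIn Z t = {t} := by
  set C := connectedComponentIn Z t
  have htC : t ∈ C := mem_connectedComponentIn ht
  have hC : ∀ᶠ x in 𝓝[≠] t, x ∉ C :=
    hiso.mono fun x hx hxC => hx (connectedComponentIn_subset Z t hxC)
  have hord : C.OrdConnected := isPreconnected_connectedComponentIn.ordConnected
  refine eq_singleton_iff_unique_mem.2 ⟨htC, fun s hs => ?_⟩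
  by_contra hst
  rcases lt_or_gt_of_ne hst with hlt | hgt
  · obtain ⟨x, hxC, hx⟩ :=
      ((hC.filter_mono (nhdsLT_le_nhdsNE t)).and (Icc_mem_nhdsLT hlt)).exists
    exact hxC (hord.out hs htC hx)
  · obtain ⟨x, hxC, hx⟩ :=
      ((hC.filter_mono (nhdsGT_le_nhdsNE t)).and (Icc_mem_nhdsGT hgt)).exists
    exact hxC (hord.out htC hs hx)

theorem exists_eq_singleton_of_mem_circComps {Z : Set ℝ} (hiso : ∀ t ∈ Z, ∀ᶠ x in 𝓝[≠] t, x ∉ Z)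
    {S : Set ℝ} (hS : S ∈ circComps Z) : ∃ t ∈ Z, t ∈ Ico (0 : ℝ) 1 ∧ S = {t} := by
  obtain ⟨t, ht, rfl, hinf⟩ := hS
  rw [connectedComponentIn_eq_singleton_of_eventually_notMem ht (hiso t ht)] at hinf ⊢
  exact ⟨t, ht, by rwa [csInf_singleton] at hinf, rfl⟩

theorem exists_isLocalExtr_of_eventually_ne (hg : Continuous g) {t : ℝ}
    (hiso : ∀ᶠ s in 𝓝[>] t, g s ≠ g t) (hnext : ∃ s > t, g s = g t) :
    ∃ x, t < x ∧ IsLocalExtr g x ∧ ∀ s ∈ Ioc t x, g s ≠ g t := by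
  set N := {s | g s = g t} ∩ Ioi t
  have hN : N.Nonempty := hnext.imp fun s ⟨hs, hgs⟩ => ⟨hgs, hs⟩
  have hbdd : BddBelow N := ⟨t, fun s hs => le_of_lt hs.2⟩
  obtain ⟨u, hu, hsub⟩ := mem_nhdsGT_iff_exists_Ioo_subset.1 hiso
  -- `sInf N` is the first return of `g` to the level `g t` after `t`
  have hut' : u ≤ sInf N := le_csInf hN fun s hs => not_lt.1 fun hsu => hsub ⟨hs.2, hsu⟩ hs.1
  have hgt' : g (sInf N) = g t :=
    closure_minimal inter_subset_left (isClosed_eq hg continuous_const) (csInf_mem_closure hN hbdd)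
  have hgap : ∀ s ∈ Ioo t (sInf N), g s ≠ g t :=
    fun s hs hgs => (csInf_le hbdd ⟨hgs, hs.1⟩).not_gt hs.2
  obtain ⟨x, hx, hext⟩ := exists_isLocalExtr_Ioo (lt_of_lt_of_le hu hut') hg.continuousOn hgt'.symm
  exact ⟨x, hx.1, hext, fun s hs => hgap s ⟨hs.1, hs.2.trans_lt hx.2⟩⟩

theorem aboveAfter_singleton_iff {t : ℝ} : AboveAfter g c {t} ↔ ∀ᶠ s in 𝓝[>] t, c < g s := by
  rw [AboveAfter, csSup_singleton, eventually_iff, mem_nhdsGT_iff_exists_Ioo_subset]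
  constructor
  · rintro ⟨ε, hε, h⟩
    exact ⟨t + ε, lt_add_of_pos_right t hε, h⟩
  · rintro ⟨u, hu, h⟩
    exact ⟨u - t, sub_pos.2 hu, by rwa [add_sub_cancel]⟩

theorem aboveBefore_singleton_iff {t : ℝ} : AboveBefore g c {t} ↔ ∀ᶠ s in 𝓝[<] t, c < g s := by
  rw [AboveBefore, csInf_singleton, eventually_iff, mem_nhdsLT_iff_exists_Ioo_subset]
  constructor
  · rintro ⟨ε, hε, h⟩
    exact ⟨t - ε, sub_lt_self t hε, h⟩
  · rintro ⟨u, hu, h⟩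
    exact ⟨t - u, sub_pos.2 hu, by rwa [sub_sub_cancel]⟩

theorem isLocalExtr_of_isGlancing (hg : Continuous g) {t : ℝ}
    (hiso : ∀ᶠ s in 𝓝[≠] t, g s ≠ g t) (hgl : IsGlancing g (g t) {t}) : IsLocalExtr g t := by
  obtain ⟨a, ha, hsubl⟩ :=
    mem_nhdsLT_iff_exists_Ioo_subset.1 (hiso.filter_mono (nhdsLT_le_nhdsNE t))
  obtain ⟨b, hb, hsubr⟩ :=
    mem_nhdsGT_iff_exists_Ioo_subset.1 (hiso.filter_mono (nhdsGT_le_nhdsNE t))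
  have hbefore := eventually_lt_or_eventually_gt isPreconnected_Ioo (Ioo_mem_nhdsLT ha)
    hg.continuousOn hsubl
  have hafter := eventually_lt_or_eventually_gt isPreconnected_Ioo (Ioo_mem_nhdsGT hb)
    hg.continuousOn hsubr
  rw [IsGlancing, aboveBefore_singleton_iff, aboveAfter_singleton_iff] at hgl
  rcases hbefore with hl | hl <;> rcases hafter with hr | hr
  · have hmin : IsLocalMin g t := eventually_nhds_of_nhdsLT_of_nhdsGT
      (hl.mono fun _ => le_of_lt) le_rfl (hr.mono fun _ => le_of_lt)
    exact hmin.isExtr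
  · obtain ⟨s, h1, h2⟩ := ((hgl.1 hl).and hr).exists
    exact absurd h1 h2.not_gt
  · obtain ⟨s, h1, h2⟩ := ((hgl.2 hr).and hl).exists
    exact absurd h1 h2.not_gt
  · have hmax : IsLocalMax g t := eventually_nhds_of_nhdsLT_of_nhdsGT
      (hl.mono fun _ => le_of_lt) le_rfl (hr.mono fun _ => le_of_lt)
    exact hmax.isExtr

end LevelSets

section Counting

variable {g : ℝ → ℝ}

theorem Function.Periodic.fract_eq_of_gaps (hper : Periodic g 1) {t s x y : ℝ}
    (hst : g s = g t) (htx : t < x) (hsy : s < y) (hx : ∀ u ∈ Ioc t x, g u ≠ g t)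
    (hy : ∀ u ∈ Ioc s y, g u ≠ g s) (hxy : Int.fract x = Int.fract y) :
    Int.fract t = Int.fract s := by
  obtain ⟨k, hk⟩ := Int.fract_eq_fract.1 hxy
  have hshift : ∀ u, g (u + k) = g u := fun u => by simpa using hper.int_mul k u
  -- `t` and `s + k` are both the last point of the level set before `x = y + k`
  have hts : t = s + k := by
    by_contra hne
    rcases lt_or_gt_of_ne hne with hlt | hgt
    · exact hx (s + k) ⟨hlt, by linarith⟩ (by rw [hshift, hst])
    · exact hy (t - k) ⟨by linarith, by linarith⟩ (by rw [← hshift, sub_add_cancel, hst])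
  rw [hts, Int.fract_add_intCast]

theorem card_circComps_add_card_glancing_le (hg : Continuous g) (hper : Periodic g 1)
    (hfin : {t ∈ Ico (0 : ℝ) 1 | IsLocalExtr g t}.Finite) (c : ℝ) :
    #(circComps {t | g t = c}) + #{S ∈ circComps {t | g t = c} | IsGlancing g c S} ≤
      #{t ∈ Ico (0 : ℝ) 1 | IsLocalExtr g t} := by
  have hiso : ∀ t, ∀ᶠ s in 𝓝[≠] t, g s ≠ g t := fun t =>
    eventually_ne_of_eventually_not_isLocalExtr hg (hper.eventually_not_isLocalExtr hfin t)
  have hcomp : ∀ S ∈ circComps {t | g t = c}, ∃ t, g t = c ∧ t ∈ Ico (0 : ℝ) 1 ∧ S = {t} :=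
    fun S => exists_eq_singleton_of_mem_circComps fun t (ht : g t = c) => ht ▸ hiso t
  choose X hX using fun t => exists_isLocalExtr_of_eventually_ne hg
    ((hiso t).filter_mono (nhdsGT_le_nhdsNE t)) ⟨t + 1, lt_add_one t, hper t⟩
  have hXne : ∀ t, g (Int.fract (X t)) ≠ g t := fun t => by
    rw [hper.map_fract]
    exact (hX t).2.2 _ ⟨(hX t).1, le_rfl⟩
  -- a component `{t}` goes to the extremum following `t`, a glancing one to `t` itself
  let φ : circComps {t | g t = c} ⊕ {S ∈ circComps {t | g t = c} | IsGlancing g c S} → ℝ :=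
    Sum.elim (fun S => Int.fract (X (sInf S.1))) (fun S => sInf S.1)
  have hφ : Injective φ := by
    rintro (⟨S, hS⟩ | ⟨S, hS, _⟩) (⟨T, hT⟩ | ⟨T, hT, _⟩) h <;>
      obtain ⟨a, ha, ha01, rfl⟩ := hcomp S hS <;> obtain ⟨b, hb, hb01, rfl⟩ := hcomp T hT <;>
      simp only [φ, Sum.elim_inl, Sum.elim_inr, csInf_singleton] at h
    · have := hper.fract_eq_of_gaps (hb.trans ha.symm) (hX a).1 (hX b).1 (hX a).2.2 (hX b).2.2 h
      rw [Int.fract_eq_self.2 ha01, Int.fract_eq_self.2 hb01] at this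
      subst this
      rfl
    · exact (hXne a (by rw [h, hb, ha])).elim
    · exact (hXne b (by rw [← h, ha, hb])).elim
    · subst h
      rfl
  have hrange : range φ ⊆ {t ∈ Ico (0 : ℝ) 1 | IsLocalExtr g t} := by
    rintro _ ⟨(⟨S, hS⟩ | ⟨S, hS, hgl⟩), rfl⟩ <;> obtain ⟨a, ha, ha01, rfl⟩ := hcomp S hS <;>
      simp only [φ, Sum.elim_inl, Sum.elim_inr, csInf_singleton]
    · exact ⟨⟨Int.fract_nonneg _, Int.fract_lt_one _⟩, hper.isLocalExtr_fract (hX a).2.1⟩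
    · exact ⟨ha01, isLocalExtr_of_isGlancing hg (hiso a) (ha ▸ hgl)⟩
  calc #(circComps {t | g t = c}) + #{S ∈ circComps {t | g t = c} | IsGlancing g c S}
      = #(range φ) := by rw [Cardinal.add_def, Cardinal.mk_range_eq φ hφ]
    _ ≤ #{t ∈ Ico (0 : ℝ) 1 | IsLocalExtr g t} := Cardinal.mk_le_mk_of_subset hrange

end Counting

theorem Set.cardinalMk_eq_of_encard_eq {α : Type*} {s : Set α} {n : ℕ} (h : s.encard = n) :
    #s = n :=
  Cardinal.toENat_eq_natCast.1 (by rwa [toENat_cardinalMk])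

theorem cutCount_le_card_isLocalExtr {K : ℝ → E} {f : E →L[ℝ] ℝ} (hK : Continuous K)
    (hper : Periodic K 1) (hfin : {t ∈ Ico (0 : ℝ) 1 | IsLocalExtr (fun s => f (K s)) t}.Finite)
    (c : ℝ) : cutCount K f c ≤ #{t ∈ Ico (0 : ℝ) 1 | IsLocalExtr (fun s => f (K s)) t} := by
  have hg : Continuous fun s => f (K s) := f.continuous.comp hK
  have hgper : Periodic (fun s => f (K s)) 1 := fun s => by simp only [hper s]
  have hnu : {t | f (K t) = c} ≠ univ := by
    intro h
    obtain ⟨s, hs⟩ := (eventually_ne_of_eventually_not_isLocalExtr hg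
      (hgper.eventually_not_isLocalExtr hfin 0)).exists
    exact hs ((eq_univ_iff_forall.1 h s).trans (eq_univ_iff_forall.1 h 0).symm)
  rw [cutCount, if_neg hnu]
  exact card_circComps_add_card_glancing_le hg hgper hfin c

/-- If a closed curve `K` in `ℝ³` admits a nonzero linear height
function with exactly `n` local minima and `n` local maxima on the domain circle
(i.e. on one period), then the `(n+1)`-st hull of `K` is empty. -/
theorem hull_succ_empty_of_bridge (n : ℕ)
    (K : ℝ → EuclideanSpace ℝ (Fin 3))
    (hK : Continuous K) (hper : Function.Periodic K 1)
    (ℓ : EuclideanSpace ℝ (Fin 3) →L[ℝ] ℝ) (hℓ : ℓ ≠ 0)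
    (hmin : {t ∈ Ico (0 : ℝ) 1 | IsLocalMin (fun s => ℓ (K s)) t}.encard = n)
    (hmax : {t ∈ Ico (0 : ℝ) 1 | IsLocalMax (fun s => ℓ (K s)) t}.encard = n) :
    hull K (n + 1) = ∅ := by
  have hextr : {t ∈ Ico (0 : ℝ) 1 | IsLocalExtr (fun s => ℓ (K s)) t} =
      {t ∈ Ico (0 : ℝ) 1 | IsLocalMin (fun s => ℓ (K s)) t} ∪
        {t ∈ Ico (0 : ℝ) 1 | IsLocalMax (fun s => ℓ (K s)) t} := by
    ext t
    exact and_or_left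
  have hfin := hextr ▸ (finite_of_encard_eq_coe hmin).union (finite_of_encard_eq_coe hmax)
  have hcard : ∀ c, cutCount K ℓ c ≤ ((2 * n : ℕ) : Cardinal) := fun c => calc
    cutCount K ℓ c ≤ #{t ∈ Ico (0 : ℝ) 1 | IsLocalExtr (fun s => ℓ (K s)) t} :=
        cutCount_le_card_isLocalExtr hK hper hfin c
    _ ≤ #{t ∈ Ico (0 : ℝ) 1 | IsLocalMin (fun s => ℓ (K s)) t} +
        #{t ∈ Ico (0 : ℝ) 1 | IsLocalMax (fun s => ℓ (K s)) t} :=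
        hextr ▸ Cardinal.mk_union_le _ _
    _ = ((2 * n : ℕ) : Cardinal) := by
        rw [cardinalMk_eq_of_encard_eq hmin, cardinalMk_eq_of_encard_eq hmax]
        push_cast
        ring
  refine eq_empty_of_forall_notMem fun p hp => ?_
  have := Nat.cast_le.1 ((hp ℓ hℓ).trans (hcard (ℓ p)))
  omega
end
end

section
/- If K is a closed curve in ℝ^d and Π : ℝ^d → ℝ^{d−1} is an orthogonal projection, then Π(hₙ(K)) ⊆ hₙ(Π(K)) for every n. -/
open Set
open scoped Classical

noncomputable section

variable {E : Type*} [NormedAddCommGroup E] [NormedSpace ℝ E]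

/-- The orthogonal projection `ℝ^{d+1} → ℝ^d` forgetting the last coordinate. -/
def dropLast (d : ℕ) (x : EuclideanSpace ℝ (Fin (d + 1))) :
    EuclideanSpace ℝ (Fin d) :=
  WithLp.toLp 2 (fun i : Fin d => x i.castSucc)

/-- If `K` is a closed curve in `ℝ^{d+1}` and `Π` is the
orthogonal projection onto `ℝ^d`, then `Π(hₙ(K)) ⊆ hₙ(Π(K))` for every `n`. -/
theorem image_hull_subset_hull_proj (d n : ℕ)
    (K : ℝ → EuclideanSpace ℝ (Fin (d + 1)))
    (hK : Continuous K) (hper : Function.Periodic K 1) :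
    dropLast d '' hull K n ⊆ hull (dropLast d ∘ K) n := by
  rintro p ⟨q, hq, rfl⟩
  intro f hf
  let L : EuclideanSpace ℝ (Fin (d + 1)) →ₗ[ℝ] EuclideanSpace ℝ (Fin d) :=
    { toFun := dropLast d
      map_add' := fun x y => rfl
      map_smul' := fun c x => rfl }
  let Lc := LinearMap.toContinuousLinearMap L
  have hLc : ∀ x, Lc x = dropLast d x := fun x => rfl
  let g := f.comp Lc
  have hg0 : g ≠ 0 := by
    intro h
    apply hf
    ext x
    have hx : dropLast d (WithLp.toLp 2 (Fin.snoc (α := fun _ => ℝ) (WithLp.ofLp x) 0)) = x := by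
      ext i
      exact Fin.snoc_castSucc (α := fun _ => ℝ) _ _ _
    have h2 : g (WithLp.toLp 2 (Fin.snoc (α := fun _ => ℝ) (WithLp.ofLp x) 0)) = 0 := by rw [h]; rfl
    have h3 : g (WithLp.toLp 2 (Fin.snoc (α := fun _ => ℝ) (WithLp.ofLp x) 0)) = f x := by
      show f (dropLast d (WithLp.toLp 2 (Fin.snoc (α := fun _ => ℝ) (WithLp.ofLp x) 0))) = f x
      rw [hx]
    simpa [h3] using h2
  exact hq g hg0
end
end
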